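/- Let G be a d-regular graph (d ≥ 3), U ⊆ V non-empty, θ ∈ [0,1), and define edge weights w(u,v) = (1-θ)^{max{dist(u,U),dist(v,U)}} with induced transition matrix Q(x,y) = w(x,y)/w(x) for x∼y. Then for any ε with θ ≤ ε ≤ 1, there exists a stochastic matrix B supported on the edges of G such that (1-ε)P + εB = Q, where P is the simple random walk transition matrix. -/

import Mathlib

open Finset

/-- The graph distance from a vertex `v` to a set of vertices `U`. -/
noncomputable def setDist {V : Type*} (G : SimpleGraph V) (U : Finset V) (v : V) : ℕ :=
  sInf ((fun u => G.dist v u) '' (U : Set V))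

/-!
For `x ∼ y` we have `setDist x ≤ setDist y + 1`, so every weight `w(x, z)` at an edge out of `x`
lies between `(1 - θ)^(k + 1)` and `(1 - θ)^k`, where `k = setDist x`. Hence
`Q(x, y) ≥ (1 - θ) / d ≥ (1 - ε) / d = (1 - ε) P(x, y)`, and `B = (Q - (1 - ε) P) / ε` is stochastic.
When `ε = 0`, the inequality `P ≤ Q` between stochastic matrices forces `P = Q`, and `B = P` works.
-/

section SetDist

variable {V : Type*} (G : SimpleGraph V)

theorem setDist_le_dist {U : Finset V} {u : V} (hu : u ∈ U) (v : V) :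
    setDist G U v ≤ G.dist v u :=
  Nat.sInf_le ⟨u, hu, rfl⟩

theorem exists_dist_eq_setDist {U : Finset V} (hU : U.Nonempty) (v : V) :
    ∃ u ∈ U, G.dist v u = setDist G U v :=
  Nat.sInf_mem ((coe_nonempty.mpr hU).image _)

theorem setDist_le_setDist_add_one_of_adj (U : Finset V) {x y : V} (h : G.Adj x y) :
    setDist G U x ≤ setDist G U y + 1 := by
  rcases U.eq_empty_or_nonempty with rfl | hU
  · simp [setDist]
  obtain ⟨u, hu, hyu⟩ := exists_dist_eq_setDist G hU y
  calc setDist G U x ≤ G.dist x u := setDist_le_dist G hu x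
    _ ≤ G.dist x y + G.dist y u := h.reachable.dist_triangle_left u
    _ = setDist G U y + 1 := by rw [SimpleGraph.dist_eq_one_iff_adj.mpr h, hyu, add_comm]

end SetDist

theorem exists_stochastic_mixture {V : Type*} [Fintype V] (E : V → V → Prop)
    (P Q : V → V → ℝ) {ε : ℝ} (hε : 0 ≤ ε)
    (hP_nonneg : ∀ x y, 0 ≤ P x y) (hP_supp : ∀ x y, ¬ E x y → P x y = 0)
    (hQ_supp : ∀ x y, ¬ E x y → Q x y = 0)
    (hP_sum : ∀ x, ∑ y, P x y = 1) (hQ_sum : ∀ x, ∑ y, Q x y = 1)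
    (hPQ : ∀ x y, (1 - ε) * P x y ≤ Q x y) :
    ∃ B : V → V → ℝ, (∀ x y, 0 ≤ B x y) ∧ (∀ x y, ¬ E x y → B x y = 0) ∧
      (∀ x, ∑ y, B x y = 1) ∧ ∀ x y, (1 - ε) * P x y + ε * B x y = Q x y := by
  rcases hε.eq_or_lt with rfl | hε
  · have hPQ_eq : ∀ x y, Q x y - P x y = 0 := fun x y => by
      have hsum : ∑ y, (Q x y - P x y) = 0 := by rw [sum_sub_distrib, hP_sum, hQ_sum, sub_self]
      exact (sum_eq_zero_iff_of_nonneg (fun y _ => by linarith [hPQ x y])).mp hsum y (mem_univ y)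
    refine ⟨P, hP_nonneg, hP_supp, hP_sum, fun x y => ?_⟩
    linarith [hPQ_eq x y]
  refine ⟨fun x y => (Q x y - (1 - ε) * P x y) / ε, fun x y => ?_, fun x y h => ?_,
    fun x => ?_, fun x y => ?_⟩
  · exact div_nonneg (sub_nonneg.mpr (hPQ x y)) hε.le
  · simp [hP_supp x y h, hQ_supp x y h]
  · rw [← sum_div, sum_sub_distrib, ← mul_sum, hP_sum, hQ_sum]
    field_simp
    ring
  · field_simp
    ring

section TransitionMatrix

variable {V : Type*} [Fintype V] (G : SimpleGraph V) [DecidableRel G.Adj]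

noncomputable def transitionMatrix (w : V → V → ℝ) (x y : V) : ℝ :=
  if G.Adj x y then w x y / ∑ z ∈ G.neighborFinset x, w x z else 0

theorem sum_ite_adj (x : V) (g : V → ℝ) :
    ∑ y, (if G.Adj x y then g y else 0) = ∑ y ∈ G.neighborFinset x, g y := by
  rw [← sum_filter, G.neighborFinset_eq_filter]

theorem sum_neighborFinset_pos {w : V → V → ℝ} {x : V} (hw : ∀ y, G.Adj x y → 0 < w x y)
    (hx : 0 < G.degree x) : 0 < ∑ z ∈ G.neighborFinset x, w x z := by
  refine sum_pos (fun z hz => hw z ((G.mem_neighborFinset x z).mp hz)) ?_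
  rwa [← card_pos, G.card_neighborFinset_eq_degree]

theorem sum_transitionMatrix {w : V → V → ℝ} {x : V} (hw : ∀ y, G.Adj x y → 0 < w x y)
    (hx : 0 < G.degree x) : ∑ y, transitionMatrix G w x y = 1 := by
  unfold transitionMatrix
  rw [sum_ite_adj, ← sum_div]
  exact div_self (sum_neighborFinset_pos G hw hx).ne'

theorem div_degree_le_transitionMatrix_pow_max {q : ℝ} (hq0 : 0 < q) (hq1 : q ≤ 1)
    (f : V → ℕ) (hf : ∀ x y, G.Adj x y → f y ≤ f x + 1) {x y : V} (h : G.Adj x y) :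
    q / G.degree x ≤ transitionMatrix G (fun x y => q ^ max (f x) (f y)) x y := by
  have hdeg : 0 < G.degree x := G.degree_pos_iff_exists_adj x |>.mpr ⟨y, h⟩
  have hsum_le : ∑ z ∈ G.neighborFinset x, q ^ max (f x) (f z) ≤ G.degree x * q ^ f x := by
    calc _ ≤ #(G.neighborFinset x) • q ^ f x := sum_le_card_nsmul _ _ _
          fun z _ => pow_le_pow_of_le_one hq0.le hq1 (le_max_left (f x) (f z))
      _ = G.degree x * q ^ f x := by rw [G.card_neighborFinset_eq_degree, nsmul_eq_mul]
  have hsum_pos := sum_neighborFinset_pos G (w := fun x y => q ^ max (f x) (f y))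
    (fun _ _ => by positivity) hdeg
  rw [transitionMatrix, if_pos h]
  calc q / G.degree x = q ^ (f x + 1) / (G.degree x * q ^ f x) := by
        rw [pow_succ]
        field_simp
    _ ≤ q ^ max (f x) (f y) / ∑ z ∈ G.neighborFinset x, q ^ max (f x) (f z) :=
        div_le_div₀ (by positivity)
          (pow_le_pow_of_le_one hq0.le hq1 (max_le (by omega) (hf x y h))) hsum_pos hsum_le

end TransitionMatrix

theorem stmt_11_general {V : Type*} [Fintype V] (G : SimpleGraph V)
    [DecidableRel G.Adj] (d : ℕ) (hd : 3 ≤ d)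
    (hreg : G.IsRegularOfDegree d)
    (U : Finset V) (θ : ℝ) (hθ0 : 0 ≤ θ) (hθ1 : θ < 1)
    (w : V → V → ℝ)
    (hw : ∀ x y, w x y = (1 - θ) ^ max (setDist G U x) (setDist G U y))
    (ε : ℝ) (hεθ : θ ≤ ε) :
    ∃ B : V → V → ℝ,
      (∀ x y, 0 ≤ B x y) ∧
      (∀ x y, ¬ G.Adj x y → B x y = 0) ∧
      (∀ x, ∑ y, B x y = 1) ∧
      (∀ x y,
        (1 - ε) * (if G.Adj x y then (1 : ℝ) / d else 0) + ε * B x y =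
          (if G.Adj x y then w x y / (∑ z ∈ G.neighborFinset x, w x z) else 0)) := by
  obtain rfl : w = fun x y => (1 - θ) ^ max (setDist G U x) (setDist G U y) := funext₂ hw
  have hdeg : ∀ x, 0 < G.degree x := fun x => by rw [hreg.degree_eq]; omega
  refine exists_stochastic_mixture G.Adj (fun x y => if G.Adj x y then (1 : ℝ) / d else 0)
    (transitionMatrix G _) (hθ0.trans hεθ) (fun x y => by split_ifs <;> positivity)
    (fun x y h => if_neg h) (fun x y h => if_neg h) (fun x => ?_)
    (fun x => sum_transitionMatrix G (fun _ _ => by positivity) (hdeg x)) (fun x y => ?_)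
  · rw [sum_ite_adj, sum_const, G.card_neighborFinset_eq_degree, hreg.degree_eq, nsmul_eq_mul]
    field_simp [show (d : ℝ) ≠ 0 by positivity]
  · by_cases h : G.Adj x y
    · calc (1 - ε) * (if G.Adj x y then (1 : ℝ) / d else 0) ≤ (1 - θ) / G.degree x := by
            rw [if_pos h, mul_one_div, hreg.degree_eq]
            gcongr
          _ ≤ _ := div_degree_le_transitionMatrix_pow_max G (by linarith) (by linarith) _
            (fun x y h => setDist_le_setDist_add_one_of_adj G U h.symm) h
    · simp [h, transitionMatrix]

theorem stmt_11 {V : Type*} [Fintype V] [DecidableEq V] (G : SimpleGraph V)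
    [DecidableRel G.Adj] (hconn : G.Connected) (d : ℕ) (hd : 3 ≤ d)
    (hreg : G.IsRegularOfDegree d)
    (U : Finset V) (hU : U.Nonempty) (θ : ℝ) (hθ0 : 0 ≤ θ) (hθ1 : θ < 1)
    (w : V → V → ℝ)
    (hw : ∀ x y, w x y = (1 - θ) ^ max (setDist G U x) (setDist G U y))
    (ε : ℝ) (hεθ : θ ≤ ε) (hε1 : ε ≤ 1) :
    ∃ B : V → V → ℝ,
      (∀ x y, 0 ≤ B x y) ∧
      (∀ x y, ¬ G.Adj x y → B x y = 0) ∧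
      (∀ x, ∑ y, B x y = 1) ∧
      (∀ x y,
        (1 - ε) * (if G.Adj x y then (1 : ℝ) / d else 0) + ε * B x y =
          (if G.Adj x y then w x y / (∑ z ∈ G.neighborFinset x, w x z) else 0)) :=
  stmt_11_general G d hd hreg U θ hθ0 hθ1 w hw ε hεθ
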